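/- arXiv:1707.06763 — 3 statements merged into one kernel-verified Lean document; each statement's English description precedes it below -/
import Mathlib

section
/- For n ≥ 2, the map φ on vertices of CQ_n defined by negating bit n-2, φ(u) = f_{n-2}(u), is a graph automorphism of CQ_n. -/
/-- The pair-related relation on 2-bit strings `(x₂, x₁)`. -/
def pairRel (a b : Bool × Bool) : Prop :=
  (a = (false, false) ∧ b = (false, false)) ∨
  (a = (true, false) ∧ b = (true, false)) ∨
  (a = (false, true) ∧ b = (true, true)) ∨
  (a = (true, true) ∧ b = (false, true))

/-- Bit `i` of a length-`n` address (`false` out of range). -/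
def bitOf {n : ℕ} (u : Fin n → Bool) (i : ℕ) : Bool :=
  if h : i < n then u ⟨i, h⟩ else false

/-- `u` and `v` are adjacent along dimension `x` in the crossed cube. -/
def adjAlong (n : ℕ) (u v : Fin n → Bool) (x : ℕ) : Prop :=
  x < n ∧
  bitOf v x = !(bitOf u x) ∧
  (x % 2 = 1 → bitOf v (x - 1) = bitOf u (x - 1)) ∧
  (∀ i, x < i → bitOf u i = bitOf v i) ∧
  (∀ i, 2 * i + 1 < x →
    pairRel (bitOf u (2 * i + 1), bitOf u (2 * i)) (bitOf v (2 * i + 1), bitOf v (2 * i)))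

/-- The `n`-dimensional crossed cube. -/
def CQ (n : ℕ) : SimpleGraph (Fin n → Bool) where
  Adj u v := ∃ x, adjAlong n u v x ∨ adjAlong n v u x
  symm := by constructor; rintro u v ⟨x, h | h⟩; exacts [⟨x, Or.inr h⟩, ⟨x, Or.inl h⟩]
  loopless := by
    constructor
    rintro u ⟨x, h | h⟩ <;>
    · obtain ⟨-, h2, -⟩ := h
      simp at h2

/-- `fneg n i u` negates bit `i` of `u`. -/
def fneg (n i : ℕ) (u : Fin n → Bool) : Fin n → Bool :=
  fun j => if (j : ℕ) = i then !(u j) else u j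

/-- `φ` is an automorphism of `CQ n`. -/
def IsAut (n : ℕ) (φ : (Fin n → Bool) → (Fin n → Bool)) : Prop :=
  Function.Bijective φ ∧ ∀ u v, (CQ n).Adj u v ↔ (CQ n).Adj (φ u) (φ v)

/-- Vertices in the same orbit of the automorphism group. -/
def orbitSetoid (n : ℕ) : Setoid (Fin n → Bool) where
  r u v := ∃ φ : CQ n ≃g CQ n, φ u = v
  iseqv := by
    refine ⟨fun u => ⟨RelIso.refl (CQ n).Adj, rfl⟩, ?_, ?_⟩
    · rintro u v ⟨φ, h⟩
      exact ⟨φ.symm, by rw [← h]; exact φ.symm_apply_apply u⟩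
    · rintro u v w ⟨φ, h⟩ ⟨ψ, h'⟩
      exact ⟨RelIso.trans φ ψ, by simp [RelIso.trans_apply, h, h']⟩

/-- The orbit number of `CQ n`. -/
noncomputable def Orb (n : ℕ) : ℕ := Nat.card (Quotient (orbitSetoid n))

/-- There is a path on exactly 4 vertices from `x` to `y` in `CQ n`. -/
def hasP4 (n : ℕ) (x y : Fin n → Bool) : Prop :=
  ∃ a b, (CQ n).Adj x a ∧ (CQ n).Adj a b ∧ (CQ n).Adj b y ∧
    x ≠ a ∧ x ≠ b ∧ x ≠ y ∧ a ≠ b ∧ a ≠ y ∧ b ≠ y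

/-- The automorphism in Lemma 4 (odd `n ≥ 3`). -/
def phiOdd (n : ℕ) (u : Fin n → Bool) : Fin n → Bool :=
  if bitOf u (n - 1) = false then fneg n (n - 3) u
  else fneg n (n - 3) (fneg n (n - 2) u)

/-- The automorphism in Lemma 5 (even `n ≥ 4`). -/
def phiEven (n : ℕ) (u : Fin n → Bool) : Fin n → Bool :=
  if (bitOf u (n-1) = false ∧ bitOf u (n-2) = true  ∧ bitOf u (n-3) = false ∧ bitOf u (n-4) = false) ∨
     (bitOf u (n-1) = true  ∧ bitOf u (n-2) = false ∧ bitOf u (n-3) = false ∧ bitOf u (n-4) = false) ∨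
     (bitOf u (n-1) = false ∧ bitOf u (n-2) = true  ∧ bitOf u (n-3) = true  ∧ bitOf u (n-4) = true) ∨
     (bitOf u (n-1) = true  ∧ bitOf u (n-2) = false ∧ bitOf u (n-3) = true  ∧ bitOf u (n-4) = true)
  then fneg n (n-4) (fneg n (n-3) u) else fneg n (n-4) u

/-- Append two zero bits at the low end. -/
def ext2 {n : ℕ} (v : Fin n → Bool) : Fin (n + 2) → Bool :=
  fun j => if h : 2 ≤ (j : ℕ) then v ⟨(j : ℕ) - 2, by have := j.isLt; omega⟩ else false

/-- Delete the two least significant bits. -/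
def drop2 {n : ℕ} (w : Fin (n + 2) → Bool) : Fin n → Bool :=
  fun j => w ⟨(j : ℕ) + 2, by have := j.isLt; omega⟩

lemma bitOf_fneg {n k : ℕ} (hk : k < n) (u : Fin n → Bool) (i : ℕ) :
    bitOf (fneg n k u) i = if i = k then !(bitOf u i) else bitOf u i := by
  unfold bitOf fneg
  by_cases hik : i = k
  · subst hik
    simp [hk]
  · simp [hik]

lemma fneg_invol (n k : ℕ) (u : Fin n → Bool) : fneg n k (fneg n k u) = u := by
  funext j
  unfold fneg
  split <;> simp

lemma pairRel_neg_fst : ∀ a b c d : Bool,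
    pairRel (a, b) (c, d) → pairRel (!a, b) (!c, d) := by
  unfold pairRel; decide

lemma adjAlong_fneg (n : ℕ) (hn : 2 ≤ n) (u v : Fin n → Bool) (x : ℕ)
    (h : adjAlong n u v x) :
    adjAlong n (fneg n (n - 2) u) (fneg n (n - 2) v) x := by
  have hk : n - 2 < n := by omega
  obtain ⟨h1, h2, h3, h4, h5⟩ := h
  refine ⟨h1, ?_, ?_, ?_, ?_⟩
  · rw [bitOf_fneg hk, bitOf_fneg hk]
    split <;> simp [h2]
  · intro hx
    rw [bitOf_fneg hk, bitOf_fneg hk]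
    split <;> simp [h3 hx]
  · intro i hi
    rw [bitOf_fneg hk, bitOf_fneg hk]
    split <;> simp [h4 i hi]
  · intro i hi
    have hp := h5 i hi
    rw [bitOf_fneg hk, bitOf_fneg hk, bitOf_fneg hk, bitOf_fneg hk]
    by_cases hlo : 2 * i = n - 2
    · exfalso; omega
    by_cases hhi : 2 * i + 1 = n - 2
    · simp only [if_pos hhi, if_neg hlo]
      exact pairRel_neg_fst _ _ _ _ hp
    · simp only [if_neg hhi, if_neg hlo]
      exact hp

/-- for `n ≥ 2`, negating bit `n - 2` is an automorphism of `CQ n`. -/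
theorem fneg_sub2_isAut (n : ℕ) (hn : 2 ≤ n) :
    IsAut n (fneg n (n - 2)) := by
  have hinv : Function.Involutive (fneg n (n - 2)) := fneg_invol n (n - 2)
  refine ⟨hinv.bijective, fun u v => ?_⟩
  have fwd : ∀ a b : Fin n → Bool, (CQ n).Adj a b →
      (CQ n).Adj (fneg n (n - 2) a) (fneg n (n - 2) b) := by
    rintro a b ⟨x, h | h⟩
    · exact ⟨x, Or.inl (adjAlong_fneg n hn a b x h)⟩
    · exact ⟨x, Or.inr (adjAlong_fneg n hn b a x h)⟩
  constructor
  · exact fwd u v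
  · intro h
    have := fwd _ _ h
    rwa [hinv u, hinv v] at this
end

section
/- For n ≥ 3, the number of orbits of the automorphism group of the crossed cube CQ_n acting on its vertex set is at most 2^{⌈n/2⌉ - 2}. -/
section Aux
variable {n : ℕ}

lemma bitOf_ge (u : Fin n → Bool) {i : ℕ} (h : n ≤ i) : bitOf u i = false := by
  simp [bitOf, Nat.not_lt.2 h]

lemma bitOf_fneg_eq {j : ℕ} (h : j < n) (u : Fin n → Bool) :
    bitOf (fneg n j u) j = !(bitOf u j) := by
  simp [bitOf, fneg, h]

lemma bitOf_fneg_ne {i j : ℕ} (h : i ≠ j) (u : Fin n → Bool) :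
    bitOf (fneg n j u) i = bitOf u i := by
  unfold bitOf fneg
  split <;> simp [h]

lemma pairRel_iff (a b c d : Bool) :
    pairRel (a, b) (c, d) ↔ d = b ∧ c = (if b then !a else a) := by
  cases a <;> cases b <;> cases c <;> cases d <;> simp [pairRel]

lemma pairStep1 {a b c d : Bool} (h : pairRel (a, b) (c, d)) : pairRel (!a, b) (!c, d) := by
  rw [pairRel_iff] at h ⊢
  cases a <;> cases b <;> cases c <;> cases d <;> simp_all

lemma pairStep2 {a b c d : Bool} (h : pairRel (a, b) (c, d)) : pairRel (a, !b) (!c, !d) := by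
  rw [pairRel_iff] at h ⊢
  cases a <;> cases b <;> cases c <;> cases d <;> simp_all

lemma pairStep3 {a b c d : Bool} (h : pairRel (a, b) (c, d)) : pairRel (!a, !b) (c, !d) := by
  rw [pairRel_iff] at h ⊢
  cases a <;> cases b <;> cases c <;> cases d <;> simp_all

lemma fneg_invol_s9 (j : ℕ) : Function.Involutive (fneg n j) := by
  intro u
  funext i
  simp only [fneg]
  split <;> simp

lemma fneg_comm {a b : ℕ} (h : a ≠ b) (u : Fin n → Bool) :
    fneg n a (fneg n b u) = fneg n b (fneg n a u) := by
  funext i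
  simp only [fneg]
  split_ifs with h1 h2 h2 <;> simp_all

end Aux
section Flip
variable {n : ℕ}

lemma flip_adjAlong {j : ℕ} (hj : j < n) {u v : Fin n → Bool} {x : ℕ}
    (h : adjAlong n u v x) (hblocks : ∀ i, 2 * i + 1 < x → 2 * i ≠ j) :
    adjAlong n (fneg n j u) (fneg n j v) x := by
  obtain ⟨hx, h1, h2, h3, h4⟩ := h
  refine ⟨hx, ?_, ?_, ?_, ?_⟩
  · by_cases hxj : x = j
    · subst hxj
      rw [bitOf_fneg_eq hj, bitOf_fneg_eq hj, h1]
    · rw [bitOf_fneg_ne hxj, bitOf_fneg_ne hxj, h1]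
  · intro hodd
    by_cases hxj : x - 1 = j
    · rw [hxj, bitOf_fneg_eq hj, bitOf_fneg_eq hj]
      rw [hxj] at h2
      rw [h2 hodd]
    · rw [bitOf_fneg_ne hxj, bitOf_fneg_ne hxj]
      exact h2 hodd
  · intro i hi
    by_cases hij : i = j
    · subst hij
      rw [bitOf_fneg_eq hj, bitOf_fneg_eq hj, h3 i hi]
    · rw [bitOf_fneg_ne hij, bitOf_fneg_ne hij]
      exact h3 i hi
  · intro i hi
    have hlo : 2 * i ≠ j := hblocks i hi
    by_cases hhi : 2 * i + 1 = j
    · rw [hhi, bitOf_fneg_eq hj, bitOf_fneg_eq hj, bitOf_fneg_ne hlo, bitOf_fneg_ne hlo]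
      exact pairStep1 (hhi ▸ h4 i hi)
    · rw [bitOf_fneg_ne hhi, bitOf_fneg_ne hhi, bitOf_fneg_ne hlo, bitOf_fneg_ne hlo]
      exact h4 i hi

lemma flip_adj {j : ℕ} (hj : j < n) (hcase : j % 2 = 1 ∨ n ≤ j + 2)
    {u v : Fin n → Bool} (h : (CQ n).Adj u v) :
    (CQ n).Adj (fneg n j u) (fneg n j v) := by
  obtain ⟨x, h | h⟩ := h
  · exact ⟨x, Or.inl (flip_adjAlong hj h (fun i hi => by have := h.1; omega))⟩
  · exact ⟨x, Or.inr (flip_adjAlong hj h (fun i hi => by have := h.1; omega))⟩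

end Flip
section PhiOdd
variable {n : ℕ}

lemma phiOdd_adjAlong (hn : 3 ≤ n) (hpar : n % 2 = 1) {u v : Fin n → Bool} {x : ℕ}
    (h : adjAlong n u v x) : adjAlong n (phiOdd n u) (phiOdd n v) x := by
  have hx := h.1
  by_cases hxtop : x = n - 1
  case neg =>
    have hxlt : x < n - 1 := by omega
    have htop : bitOf u (n-1) = bitOf v (n-1) := h.2.2.2.1 _ (by omega)
    unfold phiOdd
    rw [← htop]
    by_cases hb : bitOf u (n-1) = false
    · simp only [if_pos hb]
      exact flip_adjAlong (by omega) h (fun i hi => by omega)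
    · simp only [if_neg hb]
      exact flip_adjAlong (by omega)
        (flip_adjAlong (by omega) h (fun i hi => by omega)) (fun i hi => by omega)
  case pos =>
    subst hxtop
    obtain ⟨hx, h1, h2, h3, h4⟩ := h
    have hne1 : (n-1 : ℕ) ≠ n-3 := by omega
    have hne2 : (n-1 : ℕ) ≠ n-2 := by omega
    have hne3 : (n-2 : ℕ) ≠ n-3 := by omega
    have hne4 : (n-3 : ℕ) ≠ n-2 := by omega
    have hj3 : (n-3 : ℕ) < n := by omega
    have hj2 : (n-2 : ℕ) < n := by omega
    by_cases hb : bitOf u (n-1) = false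
    · have hbv : ¬ (bitOf v (n-1) = false) := by rw [h1, hb]; simp
      simp only [phiOdd, if_pos hb, if_neg hbv]
      refine ⟨hx, ?_, ?_, ?_, ?_⟩
      · simp only [bitOf_fneg_ne hne1, bitOf_fneg_ne hne2, h1]
      · intro hodd2; omega
      · intro i hi
        have hni : n ≤ i := by omega
        rw [bitOf_ge _ hni, bitOf_ge _ hni]
      · intro i hi
        by_cases hblk : 2*i+1 = n-2
        · have hlo : 2*i = n-3 := by omega
          have h4' := h4 i hi
          rw [hblk, hlo] at h4' ⊢
          simp only [bitOf_fneg_ne hne3, bitOf_fneg_eq hj3, bitOf_fneg_eq hj2,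
            bitOf_fneg_ne hne4]
          exact pairStep2 h4'
        · have ha : 2*i+1 ≠ n-3 := by omega
          have ha2 : 2*i+1 ≠ n-2 := hblk
          have hb1 : 2*i ≠ n-3 := by omega
          have hb2 : 2*i ≠ n-2 := by omega
          simp only [bitOf_fneg_ne ha, bitOf_fneg_ne ha2, bitOf_fneg_ne hb1, bitOf_fneg_ne hb2]
          exact h4 i hi
    · have hbv : bitOf v (n-1) = false := by rw [h1]; simp at hb; rw [hb]; rfl
      have hbv' : bitOf v (n-1) = false := hbv
      simp only [phiOdd, if_neg hb, if_pos hbv]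
      refine ⟨hx, ?_, ?_, ?_, ?_⟩
      · simp only [bitOf_fneg_ne hne1, bitOf_fneg_ne hne2, h1]
      · intro hodd2; omega
      · intro i hi
        have hni : n ≤ i := by omega
        rw [bitOf_ge _ hni, bitOf_ge _ hni]
      · intro i hi
        by_cases hblk : 2*i+1 = n-2
        · have hlo : 2*i = n-3 := by omega
          have h4' := h4 i hi
          rw [hblk, hlo] at h4' ⊢
          simp only [bitOf_fneg_ne hne3, bitOf_fneg_eq hj3, bitOf_fneg_eq hj2,
            bitOf_fneg_ne hne4]
          exact pairStep3 h4'
        · have ha : 2*i+1 ≠ n-3 := by omega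
          have ha2 : 2*i+1 ≠ n-2 := hblk
          have hb1 : 2*i ≠ n-3 := by omega
          have hb2 : 2*i ≠ n-2 := by omega
          simp only [bitOf_fneg_ne ha, bitOf_fneg_ne ha2, bitOf_fneg_ne hb1, bitOf_fneg_ne hb2]
          exact h4 i hi

end PhiOdd
/-- An automorphism for even `n ≥ 4`: flips bit `n-4`, and also bit `n-3`
when the top two bits differ. -/
def phiE (n : ℕ) (u : Fin n → Bool) : Fin n → Bool :=
  if bitOf u (n-1) = bitOf u (n-2) then fneg n (n-4) u
  else fneg n (n-4) (fneg n (n-3) u)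

section PhiE
variable {n : ℕ}

lemma phiE_adjAlong (hn : 4 ≤ n) (hpar : n % 2 = 0) {u v : Fin n → Bool} {x : ℕ}
    (h : adjAlong n u v x) : adjAlong n (phiE n u) (phiE n v) x := by
  have hx := h.1
  have hne14 : (n-1 : ℕ) ≠ n-4 := by omega
  have hne13 : (n-1 : ℕ) ≠ n-3 := by omega
  have hne24 : (n-2 : ℕ) ≠ n-4 := by omega
  have hne23 : (n-2 : ℕ) ≠ n-3 := by omega
  have hne34 : (n-3 : ℕ) ≠ n-4 := by omega
  have hne43 : (n-4 : ℕ) ≠ n-3 := by omega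
  have hj4 : (n-4 : ℕ) < n := by omega
  have hj3 : (n-3 : ℕ) < n := by omega
  by_cases hx3 : x ≤ n - 3
  · have htop1 : bitOf u (n-1) = bitOf v (n-1) := h.2.2.2.1 _ (by omega)
    have htop2 : bitOf u (n-2) = bitOf v (n-2) := h.2.2.2.1 _ (by omega)
    unfold phiE
    rw [← htop1, ← htop2]
    by_cases hc : bitOf u (n-1) = bitOf u (n-2)
    · simp only [if_pos hc]
      exact flip_adjAlong hj4 h (fun i hi => by omega)
    · simp only [if_neg hc]
      exact flip_adjAlong hj4
        (flip_adjAlong hj3 h (fun i hi => by omega)) (fun i hi => by omega)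
  by_cases hx2 : x = n - 2
  · subst hx2
    obtain ⟨hx, h1, h2, h3, h4⟩ := h
    have htop : bitOf u (n-1) = bitOf v (n-1) := h3 _ (by omega)
    by_cases hc : bitOf u (n-1) = bitOf u (n-2)
    · have hcv : ¬ (bitOf v (n-1) = bitOf v (n-2)) := by
        rw [← htop, h1, hc]; simp
      simp only [phiE, if_pos hc, if_neg hcv]
      refine ⟨hx, ?_, ?_, ?_, ?_⟩
      · simp only [bitOf_fneg_ne hne24, bitOf_fneg_ne hne23, h1]
      · intro hodd2; omega
      · intro i hi
        by_cases hni : n ≤ i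
        · rw [bitOf_ge _ hni, bitOf_ge _ hni]
        · have : i = n - 1 := by omega
          subst this
          simp only [bitOf_fneg_ne hne14, bitOf_fneg_ne hne13]
          exact h3 _ hi
      · intro i hi
        by_cases hblk : 2*i+1 = n-3
        · have hlo : 2*i = n-4 := by omega
          have h4' := h4 i hi
          rw [hblk, hlo] at h4' ⊢
          simp only [bitOf_fneg_ne hne34, bitOf_fneg_eq hj4, bitOf_fneg_eq hj3,
            bitOf_fneg_ne hne43]
          exact pairStep2 h4'
        · have ha : 2*i+1 ≠ n-4 := by omega
          have ha2 : 2*i+1 ≠ n-3 := hblk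
          have hb1 : 2*i ≠ n-4 := by omega
          have hb2 : 2*i ≠ n-3 := by omega
          simp only [bitOf_fneg_ne ha, bitOf_fneg_ne ha2, bitOf_fneg_ne hb1, bitOf_fneg_ne hb2]
          exact h4 i hi
    · have hcv : bitOf v (n-1) = bitOf v (n-2) := by
        rw [← htop, h1]
        cases hu1 : bitOf u (n-1) <;> cases hu2 : bitOf u (n-2) <;> simp_all
      simp only [phiE, if_neg hc, if_pos hcv]
      refine ⟨hx, ?_, ?_, ?_, ?_⟩
      · simp only [bitOf_fneg_ne hne24, bitOf_fneg_ne hne23, h1]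
      · intro hodd2; omega
      · intro i hi
        by_cases hni : n ≤ i
        · rw [bitOf_ge _ hni, bitOf_ge _ hni]
        · have : i = n - 1 := by omega
          subst this
          simp only [bitOf_fneg_ne hne14, bitOf_fneg_ne hne13]
          exact h3 _ hi
      · intro i hi
        by_cases hblk : 2*i+1 = n-3
        · have hlo : 2*i = n-4 := by omega
          have h4' := h4 i hi
          rw [hblk, hlo] at h4' ⊢
          simp only [bitOf_fneg_ne hne34, bitOf_fneg_eq hj4, bitOf_fneg_eq hj3,
            bitOf_fneg_ne hne43]
          exact pairStep3 h4'
        · have ha : 2*i+1 ≠ n-4 := by omega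
          have ha2 : 2*i+1 ≠ n-3 := hblk
          have hb1 : 2*i ≠ n-4 := by omega
          have hb2 : 2*i ≠ n-3 := by omega
          simp only [bitOf_fneg_ne ha, bitOf_fneg_ne ha2, bitOf_fneg_ne hb1, bitOf_fneg_ne hb2]
          exact h4 i hi
  · -- x = n - 1
    have hx1 : x = n - 1 := by omega
    subst hx1
    obtain ⟨hx, h1, h2, h3, h4⟩ := h
    have h2' : bitOf v (n-2) = bitOf u (n-2) := by
      have := h2 (by omega)
      have he : (n - 1 - 1 : ℕ) = n - 2 := by omega
      rwa [he] at this
    by_cases hc : bitOf u (n-1) = bitOf u (n-2)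
    · have hcv : ¬ (bitOf v (n-1) = bitOf v (n-2)) := by
        rw [h1, h2', hc]; simp
      simp only [phiE, if_pos hc, if_neg hcv]
      refine ⟨hx, ?_, ?_, ?_, ?_⟩
      · simp only [bitOf_fneg_ne hne14, bitOf_fneg_ne hne13, h1]
      · intro _
        have he : (n - 1 - 1 : ℕ) = n - 2 := by omega
        rw [he]
        simp only [bitOf_fneg_ne hne24, bitOf_fneg_ne hne23]
        exact h2'
      · intro i hi
        have hni : n ≤ i := by omega
        rw [bitOf_ge _ hni, bitOf_ge _ hni]
      · intro i hi
        by_cases hblk : 2*i+1 = n-3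
        · have hlo : 2*i = n-4 := by omega
          have h4' := h4 i hi
          rw [hblk, hlo] at h4' ⊢
          simp only [bitOf_fneg_ne hne34, bitOf_fneg_eq hj4, bitOf_fneg_eq hj3,
            bitOf_fneg_ne hne43]
          exact pairStep2 h4'
        · have ha : 2*i+1 ≠ n-4 := by omega
          have ha2 : 2*i+1 ≠ n-3 := hblk
          have hb1 : 2*i ≠ n-4 := by omega
          have hb2 : 2*i ≠ n-3 := by omega
          simp only [bitOf_fneg_ne ha, bitOf_fneg_ne ha2, bitOf_fneg_ne hb1, bitOf_fneg_ne hb2]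
          exact h4 i hi
    · have hcv : bitOf v (n-1) = bitOf v (n-2) := by
        rw [h1, h2']
        cases hu1 : bitOf u (n-1) <;> cases hu2 : bitOf u (n-2) <;> simp_all
      simp only [phiE, if_neg hc, if_pos hcv]
      refine ⟨hx, ?_, ?_, ?_, ?_⟩
      · simp only [bitOf_fneg_ne hne14, bitOf_fneg_ne hne13, h1]
      · intro _
        have he : (n - 1 - 1 : ℕ) = n - 2 := by omega
        rw [he]
        simp only [bitOf_fneg_ne hne24, bitOf_fneg_ne hne23]
        exact h2'
      · intro i hi
        have hni : n ≤ i := by omega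
        rw [bitOf_ge _ hni, bitOf_ge _ hni]
      · intro i hi
        by_cases hblk : 2*i+1 = n-3
        · have hlo : 2*i = n-4 := by omega
          have h4' := h4 i hi
          rw [hblk, hlo] at h4' ⊢
          simp only [bitOf_fneg_ne hne34, bitOf_fneg_eq hj4, bitOf_fneg_eq hj3,
            bitOf_fneg_ne hne43]
          exact pairStep3 h4'
        · have ha : 2*i+1 ≠ n-4 := by omega
          have ha2 : 2*i+1 ≠ n-3 := hblk
          have hb1 : 2*i ≠ n-4 := by omega
          have hb2 : 2*i ≠ n-3 := by omega
          simp only [bitOf_fneg_ne ha, bitOf_fneg_ne ha2, bitOf_fneg_ne hb1, bitOf_fneg_ne hb2]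
          exact h4 i hi

end PhiE
section Iso
variable {n : ℕ}

lemma phiOdd_invol (hn : 3 ≤ n) (u : Fin n → Bool) : phiOdd n (phiOdd n u) = u := by
  have hne1 : (n-1 : ℕ) ≠ n-3 := by omega
  have hne2 : (n-1 : ℕ) ≠ n-2 := by omega
  have ht : bitOf (phiOdd n u) (n-1) = bitOf u (n-1) := by
    unfold phiOdd
    split_ifs <;> simp only [bitOf_fneg_ne hne1, bitOf_fneg_ne hne2]
  by_cases hb : bitOf u (n-1) = false
  · rw [show phiOdd n u = fneg n (n-3) u from if_pos hb]
    have ht' : bitOf (fneg n (n-3) u) (n-1) = false := by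
      rw [bitOf_fneg_ne hne1, hb]
    rw [show phiOdd n (fneg n (n-3) u) = fneg n (n-3) (fneg n (n-3) u) from if_pos ht']
    exact fneg_invol_s9 _ u
  · rw [show phiOdd n u = fneg n (n-3) (fneg n (n-2) u) from if_neg hb]
    have ht' : ¬ (bitOf (fneg n (n-3) (fneg n (n-2) u)) (n-1) = false) := by
      rw [bitOf_fneg_ne hne1, bitOf_fneg_ne hne2]; exact hb
    rw [show phiOdd n (fneg n (n-3) (fneg n (n-2) u))
        = fneg n (n-3) (fneg n (n-2) (fneg n (n-3) (fneg n (n-2) u))) from if_neg ht']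
    rw [fneg_comm (show (n-2:ℕ) ≠ n-3 by omega), fneg_invol_s9, fneg_invol_s9]

lemma phiE_invol (hn : 4 ≤ n) (u : Fin n → Bool) : phiE n (phiE n u) = u := by
  have hne14 : (n-1 : ℕ) ≠ n-4 := by omega
  have hne13 : (n-1 : ℕ) ≠ n-3 := by omega
  have hne24 : (n-2 : ℕ) ≠ n-4 := by omega
  have hne23 : (n-2 : ℕ) ≠ n-3 := by omega
  by_cases hb : bitOf u (n-1) = bitOf u (n-2)
  · rw [show phiE n u = fneg n (n-4) u from if_pos hb]
    have ht' : bitOf (fneg n (n-4) u) (n-1) = bitOf (fneg n (n-4) u) (n-2) := by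
      rw [bitOf_fneg_ne hne14, bitOf_fneg_ne hne24]; exact hb
    rw [show phiE n (fneg n (n-4) u) = fneg n (n-4) (fneg n (n-4) u) from if_pos ht']
    exact fneg_invol_s9 _ u
  · rw [show phiE n u = fneg n (n-4) (fneg n (n-3) u) from if_neg hb]
    have ht' : ¬ (bitOf (fneg n (n-4) (fneg n (n-3) u)) (n-1)
        = bitOf (fneg n (n-4) (fneg n (n-3) u)) (n-2)) := by
      rw [bitOf_fneg_ne hne14, bitOf_fneg_ne hne13, bitOf_fneg_ne hne24, bitOf_fneg_ne hne23]
      exact hb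
    rw [show phiE n (fneg n (n-4) (fneg n (n-3) u))
        = fneg n (n-4) (fneg n (n-3) (fneg n (n-4) (fneg n (n-3) u))) from if_neg ht']
    rw [fneg_comm (show (n-3:ℕ) ≠ n-4 by omega), fneg_invol_s9, fneg_invol_s9]

/-- Build a graph isomorphism from an involutive adjacency-preserving map. -/
def mkIso (f : (Fin n → Bool) → (Fin n → Bool)) (hinv : Function.Involutive f)
    (h : ∀ u v, (CQ n).Adj u v → (CQ n).Adj (f u) (f v)) : CQ n ≃g CQ n where
  toEquiv := hinv.toPerm
  map_rel_iff' := by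
    intro a b
    simp only [Function.Involutive.coe_toPerm]
    constructor
    · intro hadj
      have := h _ _ hadj
      rwa [hinv a, hinv b] at this
    · exact h a b

lemma rstep (f : (Fin n → Bool) → (Fin n → Bool)) (hinv : Function.Involutive f)
    (h : ∀ u v, (CQ n).Adj u v → (CQ n).Adj (f u) (f v)) (u : Fin n → Bool) :
    (orbitSetoid n).r u (f u) :=
  ⟨mkIso f hinv h, rfl⟩

lemma rstep_fneg {j : ℕ} (hj : j < n) (hcase : j % 2 = 1 ∨ n ≤ j + 2) (u : Fin n → Bool) :
    (orbitSetoid n).r u (fneg n j u) :=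
  rstep _ (fneg_invol_s9 j) (fun _ _ h => flip_adj hj hcase h) u

lemma rstep_phiOdd (hn : 3 ≤ n) (hpar : n % 2 = 1) (u : Fin n → Bool) :
    (orbitSetoid n).r u (phiOdd n u) :=
  rstep _ (phiOdd_invol hn) (fun _ _ h => by
    obtain ⟨x, h | h⟩ := h
    exacts [⟨x, Or.inl (phiOdd_adjAlong hn hpar h)⟩, ⟨x, Or.inr (phiOdd_adjAlong hn hpar h)⟩]) u

lemma rstep_phiE (hn : 4 ≤ n) (hpar : n % 2 = 0) (u : Fin n → Bool) :
    (orbitSetoid n).r u (phiE n u) :=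
  rstep _ (phiE_invol hn) (fun _ _ h => by
    obtain ⟨x, h | h⟩ := h
    exacts [⟨x, Or.inl (phiE_adjAlong hn hpar h)⟩, ⟨x, Or.inr (phiE_adjAlong hn hpar h)⟩]) u

end Iso
/-- `u` with all odd-indexed bits below `m` set to `false`. -/
def clearOdd (n m : ℕ) (u : Fin n → Bool) : Fin n → Bool :=
  fun j => if (j : ℕ) < m ∧ (j : ℕ) % 2 = 1 then false else u j

section Clear
variable {n : ℕ}

lemma r_clearOdd (m : ℕ) (u : Fin n → Bool) :
    (orbitSetoid n).r u (clearOdd n m u) := by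
  induction m with
  | zero =>
    rw [show clearOdd n 0 u = u from by funext j; simp [clearOdd]]
  | succ m ih =>
    by_cases hpar : m % 2 = 1
    · by_cases hmn : m < n
      · by_cases hb : bitOf u m = true
        · have he : clearOdd n (m+1) u = fneg n m (clearOdd n m u) := by
            funext j
            have hj := j.isLt
            simp only [clearOdd, fneg]
            by_cases hjm : (j : ℕ) = m
            · have hje : j = ⟨m, hmn⟩ := Fin.ext hjm
              subst hje
              simp only [bitOf, dif_pos hmn] at hb
              simp [hpar, hb]
            · rw [if_neg hjm]
              split_ifs <;> first | rfl | omega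
          rw [he]
          exact (orbitSetoid n).iseqv.trans ih
            (rstep_fneg hmn (Or.inl hpar) (clearOdd n m u))
        · have he : clearOdd n (m+1) u = clearOdd n m u := by
            funext j
            have hj := j.isLt
            simp only [clearOdd]
            by_cases hjm : (j : ℕ) = m
            · have hje : j = ⟨m, hmn⟩ := Fin.ext hjm
              subst hje
              simp only [bitOf, dif_pos hmn, Bool.not_eq_true] at hb
              simp [hpar, hb]
            · split_ifs <;> first | rfl | omega
          rw [he]
          exact ih
      · have he : clearOdd n (m+1) u = clearOdd n m u := by
          funext j
          have hj := j.isLt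
          simp only [clearOdd]
          split_ifs <;> first | rfl | omega
        rw [he]
        exact ih
    · have he : clearOdd n (m+1) u = clearOdd n m u := by
        funext j
        simp only [clearOdd]
        split_ifs <;> first | rfl | omega
      rw [he]
      exact ih

end Clear
/-- Canonical representatives: free even bits in the low positions, zero elsewhere. -/
def emb (n k : ℕ) (c : Fin k → Bool) : Fin n → Bool :=
  fun j => if h : (j : ℕ) % 2 = 0 ∧ (j : ℕ) / 2 < k then c ⟨(j : ℕ) / 2, h.2⟩ else false

section Norm
variable {n : ℕ}

lemma bitOf_lt {i : ℕ} (h : i < n) (u : Fin n → Bool) : bitOf u i = u ⟨i, h⟩ :=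
  dif_pos h

lemma bitOf_clearOdd (m : ℕ) (u : Fin n → Bool) {j : ℕ} (hj : j < n) :
    bitOf (clearOdd n m u) j = if j < m ∧ j % 2 = 1 then false else bitOf u j := by
  rw [bitOf_lt hj, bitOf_lt hj]
  simp [clearOdd]

lemma bitOf_emb (k : ℕ) (c : Fin k → Bool) {j : ℕ} (hj : j < n) :
    bitOf (emb n k c) j = if h : j % 2 = 0 ∧ j / 2 < k then c ⟨j / 2, h.2⟩ else false := by
  rw [bitOf_lt hj]
  rfl

lemma exists_emb (hn : 3 ≤ n) (u : Fin n → Bool) :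
    ∃ c : Fin ((n+1)/2 - 2) → Bool, (orbitSetoid n).r u (emb n ((n+1)/2 - 2) c) := by
  set k := (n+1)/2 - 2 with hk
  by_cases hpar : n % 2 = 1
  · -- odd case
    have h2k : 2 * k = n - 3 := by omega
    set u1 := if bitOf u (n-1) = true then fneg n (n-1) u else u with hu1
    have hr1 : (orbitSetoid n).r u u1 := by
      by_cases hb : bitOf u (n-1) = true
      · rw [hu1, if_pos hb]
        exact rstep_fneg (by omega) (Or.inr (by omega)) u
      · rw [hu1, if_neg hb]
    have hb1 : ∀ i, i ≠ n-1 → bitOf u1 i = bitOf u i := by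
      intro i hi
      rw [hu1]
      split_ifs with h
      · exact bitOf_fneg_ne hi u
      · rfl
    have ht1 : bitOf u1 (n-1) = false := by
      rw [hu1]
      split_ifs with h
      · rw [bitOf_fneg_eq (by omega), h]; rfl
      · simpa using h
    set u2 := if bitOf u1 (n-3) = true then phiOdd n u1 else u1 with hu2
    have hr2 : (orbitSetoid n).r u1 u2 := by
      by_cases hb : bitOf u1 (n-3) = true
      · rw [hu2, if_pos hb]
        exact rstep_phiOdd hn hpar u1
      · rw [hu2, if_neg hb]
    have hphi : phiOdd n u1 = fneg n (n-3) u1 := if_pos ht1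
    have hb2 : ∀ i, i ≠ n-3 → bitOf u2 i = bitOf u1 i := by
      intro i hi
      rw [hu2]
      split_ifs with h
      · rw [hphi]; exact bitOf_fneg_ne hi u1
      · rfl
    have ht2 : bitOf u2 (n-3) = false := by
      rw [hu2]
      split_ifs with h
      · rw [hphi, bitOf_fneg_eq (by omega), h]; rfl
      · simpa using h
    refine ⟨fun i => bitOf u (2*(i:ℕ)), ?_⟩
    have hfin : clearOdd n n u2 = emb n k (fun i => bitOf u (2*(i:ℕ))) := by
      funext j
      have hj := j.isLt
      have e1 : clearOdd n n u2 j = bitOf (clearOdd n n u2) (j:ℕ) := (bitOf_lt hj _).symm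
      have e2 : emb n k (fun i => bitOf u (2*(i:ℕ))) j
          = bitOf (emb n k (fun i => bitOf u (2*(i:ℕ)))) (j:ℕ) := (bitOf_lt hj _).symm
      rw [e1, e2, bitOf_clearOdd n u2 hj, bitOf_emb k _ hj]
      by_cases hjo : (j:ℕ) % 2 = 1
      · rw [if_pos ⟨hj, hjo⟩, dif_neg (by omega)]
      · rw [if_neg (by omega)]
        by_cases hjk : (j:ℕ) / 2 < k
        · rw [dif_pos ⟨by omega, hjk⟩]
          have hjlt : (j:ℕ) < n - 3 := by omega
          simp only [Fin.val_mk]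
          rw [show 2 * ((j:ℕ)/2) = (j:ℕ) from by omega, hb2 _ (by omega),
            hb1 _ (by omega)]
        · rw [dif_neg (by omega)]
          rcases (show (j:ℕ) = n-3 ∨ (j:ℕ) = n-1 by omega) with h | h
          · rw [h]; exact ht2
          · rw [h, hb2 _ (by omega)]; exact ht1
    exact (orbitSetoid n).iseqv.trans hr1 ((orbitSetoid n).iseqv.trans hr2
      (hfin ▸ r_clearOdd n u2))
  · -- even case
    have hpar' : n % 2 = 0 := by omega
    have hn4 : 4 ≤ n := by omega
    have h2k : 2 * k = n - 4 := by omega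
    set u1 := if bitOf u (n-2) = true then fneg n (n-2) u else u with hu1
    have hr1 : (orbitSetoid n).r u u1 := by
      by_cases hb : bitOf u (n-2) = true
      · rw [hu1, if_pos hb]
        exact rstep_fneg (by omega) (Or.inr (by omega)) u
      · rw [hu1, if_neg hb]
    have hb1 : ∀ i, i ≠ n-2 → bitOf u1 i = bitOf u i := by
      intro i hi
      rw [hu1]
      split_ifs with h
      · exact bitOf_fneg_ne hi u
      · rfl
    have ht1 : bitOf u1 (n-2) = false := by
      rw [hu1]
      split_ifs with h
      · rw [bitOf_fneg_eq (by omega), h]; rfl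
      · simpa using h
    set u2 := if bitOf u1 (n-4) = true then phiE n u1 else u1 with hu2
    have hr2 : (orbitSetoid n).r u1 u2 := by
      by_cases hb : bitOf u1 (n-4) = true
      · rw [hu2, if_pos hb]
        exact rstep_phiE hn4 hpar' u1
      · rw [hu2, if_neg hb]
    have hb2 : ∀ i, i ≠ n-4 → i ≠ n-3 → bitOf u2 i = bitOf u1 i := by
      intro i hi hi'
      rw [hu2]
      split_ifs with h
      · unfold phiE
        split_ifs with h2
        · exact bitOf_fneg_ne hi u1
        · rw [bitOf_fneg_ne hi, bitOf_fneg_ne hi']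
      · rfl
    have ht2 : bitOf u2 (n-4) = false := by
      rw [hu2]
      split_ifs with h
      · unfold phiE
        split_ifs with h2
        · rw [bitOf_fneg_eq (by omega), h]; rfl
        · rw [bitOf_fneg_eq (by omega), bitOf_fneg_ne (by omega : (n-4:ℕ) ≠ n-3), h]; rfl
      · simpa using h
    refine ⟨fun i => bitOf u (2*(i:ℕ)), ?_⟩
    have hfin : clearOdd n n u2 = emb n k (fun i => bitOf u (2*(i:ℕ))) := by
      funext j
      have hj := j.isLt
      have e1 : clearOdd n n u2 j = bitOf (clearOdd n n u2) (j:ℕ) := (bitOf_lt hj _).symm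
      have e2 : emb n k (fun i => bitOf u (2*(i:ℕ))) j
          = bitOf (emb n k (fun i => bitOf u (2*(i:ℕ)))) (j:ℕ) := (bitOf_lt hj _).symm
      rw [e1, e2, bitOf_clearOdd n u2 hj, bitOf_emb k _ hj]
      by_cases hjo : (j:ℕ) % 2 = 1
      · rw [if_pos ⟨hj, hjo⟩, dif_neg (by omega)]
      · rw [if_neg (by omega)]
        by_cases hjk : (j:ℕ) / 2 < k
        · rw [dif_pos ⟨by omega, hjk⟩]
          have hjlt : (j:ℕ) < n - 4 := by omega
          simp only [Fin.val_mk]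
          rw [show 2 * ((j:ℕ)/2) = (j:ℕ) from by omega, hb2 _ (by omega) (by omega),
            hb1 _ (by omega)]
        · rw [dif_neg (by omega)]
          rcases (show (j:ℕ) = n-4 ∨ (j:ℕ) = n-2 by omega) with h | h
          · rw [h]; exact ht2
          · rw [h, hb2 _ (by omega) (by omega)]; exact ht1
    exact (orbitSetoid n).iseqv.trans hr1 ((orbitSetoid n).iseqv.trans hr2
      (hfin ▸ r_clearOdd n u2))

end Norm
/-- for `n ≥ 3`, the number of orbits of `Aut(CQ n)` on the vertex set
is at most `2 ^ (⌈n/2⌉ - 2)`. -/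
theorem orb_upper_bound (n : ℕ) (hn : 3 ≤ n) :
    Orb n ≤ 2 ^ ((n + 1) / 2 - 2) := by
  set k := (n+1)/2 - 2 with hk
  have hsurj : Function.Surjective
      (fun c : Fin k → Bool => (Quotient.mk (orbitSetoid n) (emb n k c))) := by
    intro q
    induction q using Quotient.inductionOn with
    | h u =>
      obtain ⟨c, hc⟩ := exists_emb hn u
      exact ⟨c, Quotient.sound ((orbitSetoid n).iseqv.symm hc)⟩
  calc Orb n = Nat.card (Quotient (orbitSetoid n)) := rfl
    _ ≤ Nat.card (Fin k → Bool) := Nat.card_le_card_of_surjective _ hsurj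
    _ = 2 ^ k := by
        simp [Nat.card_eq_fintype_card]
end

section
/- For n ≥ 5, if φ is an automorphism of CQ_{n+2}, then the map φ̂ defined on vertices of CQ_n by φ̂(v) = ⌊φ(4v)/4⌋ (i.e., appending 00 to v, applying φ, and deleting the two least significant bits) is an automorphism of CQ_n. -/
namespace CQaux

variable {m : ℕ}

lemma bitOf_ge {u : Fin m → Bool} {i : ℕ} (h : m ≤ i) : bitOf u i = false := by
  rw [bitOf, dif_neg (by omega)]

lemma bit_ext {u v : Fin m → Bool} (h : ∀ i, bitOf u i = bitOf v i) : u = v := by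
  funext j
  have := h j
  simpa [bitOf, j.isLt] using this

lemma pairRel_iff (a b c d : Bool) :
    pairRel (a, b) (c, d) ↔ (d = b ∧ c = xor a b) := by
  cases a <;> cases b <;> cases c <;> cases d <;> simp [pairRel, Prod.ext_iff]

/-- Neighbor of `u` along dimension `x`. -/
def nbrF (x : ℕ) (u : Fin m → Bool) : Fin m → Bool :=
  fun j => if (j : ℕ) = x then !(u j)
    else if (j : ℕ) % 2 = 1 ∧ (j : ℕ) < x then xor (u j) (bitOf u ((j : ℕ) - 1))
    else u j

lemma bitOf_nbrF (x : ℕ) (u : Fin m → Bool) (i : ℕ) (hx : x < m) :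
    bitOf (nbrF x u) i =
      if i = x then !(bitOf u i)
      else if i % 2 = 1 ∧ i < x then xor (bitOf u i) (bitOf u (i - 1))
      else bitOf u i := by
  by_cases h : i < m
  · simp [bitOf, nbrF, h]
  · rw [bitOf_ge (by omega), if_neg (by omega), if_neg (by omega), bitOf_ge (by omega)]

lemma adjAlong_iff {u v : Fin m → Bool} {x : ℕ} :
    adjAlong m u v x ↔ x < m ∧ v = nbrF x u := by
  constructor
  · rintro ⟨hx, h1, h2, h3, h4⟩
    refine ⟨hx, bit_ext fun i => ?_⟩
    rw [bitOf_nbrF x u i hx]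
    by_cases hix : i = x
    · subst hix; simp [h1]
    · rw [if_neg hix]
      by_cases hlt : i < x
      · by_cases hodd : i % 2 = 1
        · rw [if_pos ⟨hodd, hlt⟩]
          have hp := h4 (i / 2) (by omega)
          have h2i : 2 * (i / 2) + 1 = i := by omega
          have h2i' : 2 * (i / 2) = i - 1 := by omega
          rw [h2i, h2i', pairRel_iff] at hp
          exact hp.2
        · rw [if_neg (by tauto)]
          -- i even, i < x
          by_cases hx1 : i + 1 = x
          · have hxodd : x % 2 = 1 := by omega
            have := h2 hxodd
            rw [show x - 1 = i by omega] at this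
            exact this
          · have hp := h4 (i / 2) (by omega)
            have h2i : 2 * (i / 2) = i := by omega
            rw [h2i, pairRel_iff] at hp
            exact hp.1
      · rw [if_neg (by tauto)]
        exact (h3 i (by omega)).symm
  · rintro ⟨hx, rfl⟩
    refine ⟨hx, ?_, ?_, ?_, ?_⟩
    · rw [bitOf_nbrF x u x hx, if_pos rfl]
    · intro hxodd
      rw [bitOf_nbrF x u (x-1) hx, if_neg (by omega), if_neg (by omega)]
    · intro i hi
      rw [bitOf_nbrF x u i hx, if_neg (by omega), if_neg (by omega)]
    · intro i hi
      rw [bitOf_nbrF x u (2*i+1) hx, bitOf_nbrF x u (2*i) hx,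
        if_neg (by omega), if_pos ⟨by omega, by omega⟩,
        if_neg (by omega), if_neg (by omega)]
      rw [pairRel_iff]
      exact ⟨rfl, by rw [show 2*i+1-1 = 2*i by omega]⟩

lemma nbrF_invol {x : ℕ} (hx : x < m) (u : Fin m → Bool) :
    nbrF x (nbrF x u) = u := by
  apply bit_ext; intro i
  rw [bitOf_nbrF x _ i hx, bitOf_nbrF x u i hx]
  by_cases hix : i = x
  · simp [hix]
  · rw [if_neg hix, if_neg hix]
    by_cases hc : i % 2 = 1 ∧ i < x
    · rw [if_pos hc, if_pos hc, bitOf_nbrF x u (i-1) hx,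
        if_neg (by omega), if_neg (by omega)]
      cases bitOf u i <;> cases bitOf u (i-1) <;> rfl
    · rw [if_neg hc, if_neg hc]

lemma Adj_iff {u v : Fin m → Bool} :
    (CQ m).Adj u v ↔ ∃ x, x < m ∧ v = nbrF x u := by
  constructor
  · rintro ⟨x, h | h⟩
    · rw [adjAlong_iff] at h; exact ⟨x, h⟩
    · rw [adjAlong_iff] at h
      obtain ⟨hx, rfl⟩ := h
      exact ⟨x, hx, (nbrF_invol hx v).symm⟩
  · rintro ⟨x, hx, rfl⟩
    exact ⟨x, Or.inl (adjAlong_iff.mpr ⟨hx, rfl⟩)⟩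

end CQaux
namespace CQaux

variable {m : ℕ}

lemma bitOf_nbrF_self {x : ℕ} (hx : x < m) (u : Fin m → Bool) :
    bitOf (nbrF x u) x = !(bitOf u x) := by
  rw [bitOf_nbrF x u x hx, if_pos rfl]

lemma bitOf_nbrF_gt {x : ℕ} (hx : x < m) (u : Fin m → Bool) {i : ℕ} (hi : x < i) :
    bitOf (nbrF x u) i = bitOf u i := by
  rw [bitOf_nbrF x u i hx, if_neg (by omega), if_neg (by omega)]

lemma nbrF_ne_self {x : ℕ} (hx : x < m) (u : Fin m → Bool) : nbrF x u ≠ u := by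
  intro h
  have := bitOf_nbrF_self hx u
  rw [h] at this
  exact (Bool.not_ne_self _).symm this

lemma nbrF_inj_dim {x y : ℕ} (hx : x < m) (hy : y < m) (u : Fin m → Bool)
    (h : nbrF x u = nbrF y u) : x = y := by
  by_contra hne
  rcases Nat.lt_or_ge x y with hlt | hge
  · have h1 := bitOf_nbrF_self hy u
    have h2 := bitOf_nbrF_gt hx u hlt
    rw [h] at h2
    rw [h1] at h2
    exact (Bool.not_ne_self _).symm h2.symm
  · have hlt : y < x := by omega
    have h1 := bitOf_nbrF_self hx u
    have h2 := bitOf_nbrF_gt hy u hlt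
    rw [← h] at h2
    rw [h1] at h2
    exact (Bool.not_ne_self _).symm h2.symm

lemma nbrF_comm {x y : ℕ} (hx : x < m) (hy : y < m) (hyo : y % 2 = 1)
    (hc : ¬(x % 2 = 0 ∧ x + 1 < y)) (u : Fin m → Bool) :
    nbrF x (nbrF y u) = nbrF y (nbrF x u) := by
  by_cases hxy : x = y
  · rw [hxy]
  apply bit_ext; intro i
  rw [bitOf_nbrF x (nbrF y u) i hx, bitOf_nbrF y (nbrF x u) i hy]
  simp only [bitOf_nbrF x u _ hx, bitOf_nbrF y u _ hy]
  split_ifs <;>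
    first
      | rfl
      | (exfalso; omega)
      | (cases bitOf u i <;> cases bitOf u (i-1) <;> cases bitOf u (i-1-1) <;> rfl)

end CQaux
namespace CQaux

variable {m : ℕ}

/-- A 4-cycle through the (ordered) edge `(u, v)`. -/
def cycCond (u v : Fin m → Bool) (ab : (Fin m → Bool) × (Fin m → Bool)) : Prop :=
  (CQ m).Adj v ab.1 ∧ (CQ m).Adj ab.1 ab.2 ∧ (CQ m).Adj ab.2 u ∧ ab.1 ≠ u ∧ ab.2 ≠ v

lemma comm01 (hm : 2 ≤ m) (u : Fin m → Bool) :
    nbrF 1 (nbrF 0 u) = nbrF 0 (nbrF 1 u) :=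
  (nbrF_comm (by omega) (by omega) (by omega) (by omega) u).symm

lemma cyc_of_comm {x y : ℕ} (hx : x < m) (hy : y < m) (hxy : x ≠ y) (u : Fin m → Bool)
    (hcomm : nbrF x (nbrF y u) = nbrF y (nbrF x u)) :
    cycCond u (nbrF x u) (nbrF y (nbrF x u), nbrF y u) := by
  refine ⟨Adj_iff.mpr ⟨y, hy, rfl⟩, ?_, ?_, ?_, ?_⟩
  · exact ((CQ m).adj_symm (Adj_iff.mpr ⟨x, hx, hcomm.symm⟩))
  · exact Adj_iff.mpr ⟨y, hy, (nbrF_invol hy u).symm⟩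
  · intro h
    have hu : u = nbrF x (nbrF x u) := (nbrF_invol hx u).symm
    simp only at h
    have h2 : nbrF y (nbrF x u) = nbrF x (nbrF x u) := by rw [h, ← hu]
    exact hxy (nbrF_inj_dim hy hx _ h2).symm
  · intro h
    exact hxy (nbrF_inj_dim hy hx u h).symm

lemma lemmaA_exists (hm : 2 ≤ m) (u : Fin m → Bool) :
    cycCond u (nbrF 0 u) (nbrF 1 (nbrF 0 u), nbrF 1 u) :=
  cyc_of_comm (by omega) (by omega) (by omega) u (comm01 hm u).symm

lemma lemmaA_unique (hm : 2 ≤ m) (u : Fin m → Bool)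
    {ab : (Fin m → Bool) × (Fin m → Bool)} (h : cycCond u (nbrF 0 u) ab) :
    ab = (nbrF 1 (nbrF 0 u), nbrF 1 u) := by
  obtain ⟨hva, hab, hbu, hau, hbv⟩ := h
  obtain ⟨y, hy, ha⟩ := Adj_iff.mp hva
  obtain ⟨z, hz, hb⟩ := Adj_iff.mp ((CQ m).adj_symm hbu)
  obtain ⟨w, hw, hw'⟩ := Adj_iff.mp hab
  have h0 : (0:ℕ) < m := by omega
  have h1 : (1:ℕ) < m := by omega
  have hy0 : y ≠ 0 := by
    rintro rfl
    exact hau (by rw [ha, nbrF_invol h0 u])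
  have hz0 : z ≠ 0 := by
    rintro rfl
    exact hbv hb
  -- bit 0 of a and b
  have ha0 : bitOf ab.1 0 = !(bitOf u 0) := by
    rw [ha, bitOf_nbrF y _ 0 hy, if_neg (Ne.symm hy0), if_neg (by omega),
      bitOf_nbrF_self h0]
  have hb0 : bitOf ab.2 0 = bitOf u 0 := by
    rw [hb, bitOf_nbrF z _ 0 hz, if_neg (Ne.symm hz0), if_neg (by omega)]
  -- w = 0
  have hw0 : w = 0 := by
    by_contra hne
    have : bitOf ab.2 0 = bitOf ab.1 0 := by
      rw [hw', bitOf_nbrF w _ 0 hw, if_neg (Ne.symm hne), if_neg (by omega)]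
    rw [hb0, ha0] at this
    cases h : bitOf u 0 <;> rw [h] at this <;> simp at this
  have hhi : ∀ i, 1 ≤ i → bitOf ab.2 i = bitOf ab.1 i := by
    intro i hi
    rw [hw', hw0]
    exact bitOf_nbrF_gt h0 _ (by omega)
  -- y = z
  have hyz : y = z := by
    by_contra hne
    rcases Nat.lt_or_ge y z with hlt | hge
    · have e1 : bitOf ab.2 z = !(bitOf u z) := by rw [hb, bitOf_nbrF_self hz]
      have e2 : bitOf ab.1 z = bitOf u z := by
        rw [ha, bitOf_nbrF y _ z hy, if_neg (by omega), if_neg (by omega),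
          bitOf_nbrF 0 u z h0, if_neg (by omega), if_neg (by omega)]
      have := hhi z (by omega)
      rw [e1, e2] at this
      cases h : bitOf u z <;> rw [h] at this <;> simp at this
    · have hlt : z < y := by omega
      have e1 : bitOf ab.1 y = !(bitOf u y) := by
        rw [ha, bitOf_nbrF_self hy, bitOf_nbrF 0 u y h0, if_neg (by omega),
          if_neg (by omega)]
      have e2 : bitOf ab.2 y = bitOf u y := by
        rw [hb, bitOf_nbrF z u y hz, if_neg (by omega), if_neg (by omega)]
      have := hhi y (by omega)
      rw [e1, e2] at this
      cases h : bitOf u y <;> rw [h] at this <;> simp at this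
  -- y = 1
  have hy1 : y = 1 := by
    by_contra hne
    have hy2 : 2 ≤ y := by omega
    have e1 : bitOf ab.1 1 = xor (bitOf u 1) (!(bitOf u 0)) := by
      rw [ha, bitOf_nbrF y _ 1 hy, if_neg (by omega), if_pos ⟨by omega, by omega⟩,
        bitOf_nbrF 0 u 1 h0, if_neg (by omega), if_neg (by omega),
        show (1:ℕ) - 1 = 0 by omega, bitOf_nbrF_self h0]
    have e2 : bitOf ab.2 1 = xor (bitOf u 1) (bitOf u 0) := by
      rw [hb, bitOf_nbrF z u 1 hz, if_neg (by omega), if_pos ⟨by omega, by omega⟩,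
        show (1:ℕ) - 1 = 0 by omega]
    have := hhi 1 (by omega)
    rw [e1, e2] at this
    cases h : bitOf u 0 <;> cases h' : bitOf u 1 <;> rw [h, h'] at this <;> simp at this
  have hz1 : z = 1 := by omega
  have hbval : ab.2 = nbrF 1 u := by rw [hb, hz1]
  have haval : ab.1 = nbrF 1 (nbrF 0 u) := by rw [ha, hy1]
  exact Prod.ext haval hbval

lemma lemmaB (hm : 6 ≤ m) {x : ℕ} (hx1 : 1 ≤ x) (hx : x < m) (u : Fin m → Bool) :
    ∃ p q, p ≠ q ∧ cycCond u (nbrF x u) p ∧ cycCond u (nbrF x u) q := by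
  set y1 : ℕ := if x = 1 then 3 else 1 with hy1
  set y2 : ℕ := if x = 1 ∨ x = 3 then 5 else 3 with hy2
  have hy1m : y1 < m := by rw [hy1]; split <;> omega
  have hy2m : y2 < m := by rw [hy2]; split <;> omega
  have hy1o : y1 % 2 = 1 := by rw [hy1]; split <;> omega
  have hy2o : y2 % 2 = 1 := by rw [hy2]; split <;> omega
  have hxy1 : x ≠ y1 := by rw [hy1]; split <;> omega
  have hxy2 : x ≠ y2 := by
    rw [hy2]; split
    next h => rcases h with h | h <;> omega
    next h => omega
  have hy12 : y1 ≠ y2 := by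
    rw [hy1, hy2]; split <;> split
    · omega
    · next h h' => omega
    · omega
    · omega
  have hc1 : ¬(x % 2 = 0 ∧ x + 1 < y1) := by rw [hy1]; split <;> omega
  have hc2 : ¬(x % 2 = 0 ∧ x + 1 < y2) := by
    rw [hy2]; split
    next h => rcases h with h | h <;> omega
    next h => omega
  refine ⟨_, _, ?_, cyc_of_comm hx hy1m hxy1 u (nbrF_comm hx hy1m hy1o hc1 u),
      cyc_of_comm hx hy2m hxy2 u (nbrF_comm hx hy2m hy2o hc2 u)⟩
  intro h
  have := congrArg Prod.snd h
  simp only at this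
  exact hy12 (nbrF_inj_dim hy1m hy2m u this)

end CQaux
namespace CQaux

variable {m : ℕ}

def Uniq (u v : Fin m → Bool) : Prop := ∃! ab, cycCond u v ab

lemma uniq_iff (hm : 6 ≤ m) {u v : Fin m → Bool} (hadj : (CQ m).Adj u v) :
    Uniq u v ↔ v = nbrF 0 u := by
  constructor
  · intro hU
    obtain ⟨x, hx, rfl⟩ := Adj_iff.mp hadj
    rcases Nat.eq_zero_or_pos x with rfl | hx1
    · rfl
    · exfalso
      obtain ⟨p, q, hpq, hp, hq⟩ := lemmaB hm hx1 hx u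
      obtain ⟨ab, hab, huni⟩ := hU
      exact hpq ((huni p hp).trans (huni q hq).symm)
  · rintro rfl
    exact ⟨_, lemmaA_exists (by omega) u, fun ab hab => lemmaA_unique (by omega) u hab⟩

lemma cycCond_map (φ : CQ m ≃g CQ m) {u v a b : Fin m → Bool}
    (h : cycCond u v (a, b)) : cycCond (φ u) (φ v) (φ a, φ b) := by
  obtain ⟨h1, h2, h3, h4, h5⟩ := h
  exact ⟨φ.map_adj_iff.mpr h1, φ.map_adj_iff.mpr h2, φ.map_adj_iff.mpr h3,
    fun h => h4 (φ.injective h), fun h => h5 (φ.injective h)⟩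

lemma uniq_transfer (φ : CQ m ≃g CQ m) {u v : Fin m → Bool} (h : Uniq u v) :
    Uniq (φ u) (φ v) := by
  obtain ⟨⟨a, b⟩, hab, huni⟩ := h
  refine ⟨(φ a, φ b), cycCond_map φ hab, ?_⟩
  rintro ⟨c, d⟩ hcd
  have h2 : cycCond u v (φ.symm c, φ.symm d) := by
    have := cycCond_map φ.symm hcd
    simpa using this
  have h3 := huni _ h2
  have hc : φ.symm c = a := congrArg Prod.fst h3
  have hd : φ.symm d = b := congrArg Prod.snd h3
  have : c = φ a := by rw [← hc]; simp
  have : d = φ b := by rw [← hd]; simp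
  simp_all

lemma aut_comm0 (hm : 6 ≤ m) (φ : CQ m ≃g CQ m) (w : Fin m → Bool) :
    φ (nbrF 0 w) = nbrF 0 (φ w) := by
  have h0 : (0:ℕ) < m := by omega
  have hadj : (CQ m).Adj w (nbrF 0 w) := Adj_iff.mpr ⟨0, h0, rfl⟩
  have hU : Uniq w (nbrF 0 w) := (uniq_iff hm hadj).mpr rfl
  have hadj' : (CQ m).Adj (φ w) (φ (nbrF 0 w)) := φ.map_adj_iff.mpr hadj
  exact (uniq_iff hm hadj').mp (uniq_transfer φ hU)

lemma aut_comm1 (hm : 6 ≤ m) (φ : CQ m ≃g CQ m) (w : Fin m → Bool) :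
    φ (nbrF 1 w) = nbrF 1 (φ w) := by
  have hA := lemmaA_exists (by omega : 2 ≤ m) w
  have hmap := cycCond_map φ hA
  rw [aut_comm0 hm φ w] at hmap
  have := lemmaA_unique (by omega : 2 ≤ m) (φ w) hmap
  exact congrArg Prod.snd this

end CQaux

namespace CQaux

variable {n : ℕ}

lemma bitOf_ext2 (v : Fin n → Bool) (i : ℕ) :
    bitOf (ext2 v) i = if 2 ≤ i then bitOf v (i - 2) else false := by
  by_cases h : i < n + 2
  · rw [bitOf, dif_pos h]
    by_cases h2 : 2 ≤ i
    · rw [if_pos h2, ext2, dif_pos h2, bitOf, dif_pos (by omega)]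
    · rw [if_neg h2, ext2, dif_neg h2]
  · rw [bitOf_ge (by omega)]
    by_cases h2 : 2 ≤ i
    · rw [if_pos h2, bitOf_ge (by omega)]
    · rw [if_neg h2]

lemma bitOf_drop2 (w : Fin (n + 2) → Bool) (i : ℕ) (hi : i < n) :
    bitOf (drop2 w) i = bitOf w (i + 2) := by
  rw [bitOf, dif_pos hi, drop2, bitOf, dif_pos (by omega)]

lemma drop2_ext2 (v : Fin n → Bool) : drop2 (ext2 v) = v := by
  apply bit_ext; intro i
  by_cases hi : i < n
  · rw [bitOf_drop2 _ i hi, bitOf_ext2, if_pos (by omega)]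
    congr 1
  · rw [bitOf_ge (by omega), bitOf_ge (by omega)]

lemma adjAlong_ext2 {u v : Fin n → Bool} {x : ℕ} (h : adjAlong n u v x) :
    adjAlong (n + 2) (ext2 u) (ext2 v) (x + 2) := by
  obtain ⟨hx, h1, h2, h3, h4⟩ := h
  refine ⟨by omega, ?_, ?_, ?_, ?_⟩
  · rw [bitOf_ext2, bitOf_ext2, if_pos (by omega), if_pos (by omega),
      show x + 2 - 2 = x by omega, h1]
  · intro hodd
    have hxo : x % 2 = 1 := by omega
    have hx1 : 1 ≤ x := by omega
    rw [bitOf_ext2, bitOf_ext2, if_pos (by omega), if_pos (by omega),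
      show x + 2 - 1 - 2 = x - 1 by omega, h2 hxo]
  · intro i hi
    rw [bitOf_ext2, bitOf_ext2]
    by_cases h2i : 2 ≤ i
    · rw [if_pos h2i, if_pos h2i, h3 (i - 2) (by omega)]
    · omega
  · intro i hi
    rcases Nat.eq_zero_or_pos i with rfl | hi1
    · rw [bitOf_ext2, bitOf_ext2, bitOf_ext2, bitOf_ext2]
      norm_num [pairRel]
    · rw [bitOf_ext2, bitOf_ext2, bitOf_ext2, bitOf_ext2,
        if_pos (by omega), if_pos (by omega), if_pos (by omega), if_pos (by omega),
        show 2 * i + 1 - 2 = 2 * (i - 1) + 1 by omega,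
        show 2 * i - 2 = 2 * (i - 1) by omega]
      exact h4 (i - 1) (by omega)

lemma Adj_ext2 {u v : Fin n → Bool} (h : (CQ n).Adj u v) :
    (CQ (n + 2)).Adj (ext2 u) (ext2 v) := by
  obtain ⟨x, h | h⟩ := h
  · exact ⟨x + 2, Or.inl (adjAlong_ext2 h)⟩
  · exact ⟨x + 2, Or.inr (adjAlong_ext2 h)⟩

lemma adjAlong_low {w z : Fin (n + 2) → Bool} {x : ℕ} (h : adjAlong (n + 2) w z x)
    (hx : x ≤ 1) : drop2 w = drop2 z := by
  obtain ⟨-, -, -, h3, -⟩ := h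
  apply bit_ext; intro i
  by_cases hi : i < n
  · rw [bitOf_drop2 _ i hi, bitOf_drop2 _ i hi]
    exact h3 (i + 2) (by omega)
  · rw [bitOf_ge (by omega), bitOf_ge (by omega)]

lemma adjAlong_drop2 {w z : Fin (n + 2) → Bool} {x : ℕ} (h : adjAlong (n + 2) w z x)
    (hx : 2 ≤ x) : adjAlong n (drop2 w) (drop2 z) (x - 2) := by
  obtain ⟨hxm, h1, h2, h3, h4⟩ := h
  have hxn : x - 2 < n := by omega
  refine ⟨hxn, ?_, ?_, ?_, ?_⟩
  · rw [bitOf_drop2 _ _ hxn, bitOf_drop2 _ _ hxn, show x - 2 + 2 = x by omega, h1]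
  · intro hodd
    have hxo : x % 2 = 1 := by omega
    have hx3 : x - 2 - 1 < n := by omega
    rw [bitOf_drop2 _ _ hx3, bitOf_drop2 _ _ hx3, show x - 2 - 1 + 2 = x - 1 by omega,
      h2 hxo]
  · intro i hi
    by_cases hin : i < n
    · rw [bitOf_drop2 _ i hin, bitOf_drop2 _ i hin, h3 (i + 2) (by omega)]
    · rw [bitOf_ge (by omega), bitOf_ge (by omega)]
  · intro i hi
    have hlt : 2 * i + 1 < n := by omega
    have hlt2 : 2 * i < n := by omega
    rw [bitOf_drop2 _ _ hlt, bitOf_drop2 _ _ hlt2, bitOf_drop2 _ _ hlt,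
      bitOf_drop2 _ _ hlt2, show 2 * i + 1 + 2 = 2 * (i + 1) + 1 by omega,
      show 2 * i + 2 = 2 * (i + 1) by omega]
    exact h4 (i + 1) (by omega)

lemma Adj_drop2 {w z : Fin (n + 2) → Bool} (h : (CQ (n + 2)).Adj w z)
    (hne : drop2 w ≠ drop2 z) : (CQ n).Adj (drop2 w) (drop2 z) := by
  obtain ⟨x, h | h⟩ := h
  · by_cases hx : 2 ≤ x
    · exact ⟨x - 2, Or.inl (adjAlong_drop2 h hx)⟩
    · exact absurd (adjAlong_low h (by omega)) hne
  · by_cases hx : 2 ≤ x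
    · exact ⟨x - 2, Or.inr (adjAlong_drop2 h hx)⟩
    · exact absurd (adjAlong_low h (by omega)).symm hne

lemma drop2_nbrF0 (w : Fin (n + 2) → Bool) : drop2 (nbrF 0 w) = drop2 w := by
  apply bit_ext; intro i
  by_cases hi : i < n
  · rw [bitOf_drop2 _ i hi, bitOf_drop2 _ i hi, bitOf_nbrF_gt (by omega) w (by omega)]
  · rw [bitOf_ge (by omega), bitOf_ge (by omega)]

lemma drop2_nbrF1 (w : Fin (n + 2) → Bool) : drop2 (nbrF 1 w) = drop2 w := by
  apply bit_ext; intro i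
  by_cases hi : i < n
  · rw [bitOf_drop2 _ i hi, bitOf_drop2 _ i hi, bitOf_nbrF_gt (by omega) w (by omega)]
  · rw [bitOf_ge (by omega), bitOf_ge (by omega)]

lemma classEq {w z : Fin (n + 2) → Bool} :
    drop2 w = drop2 z ↔
      (z = w ∨ z = nbrF 0 w ∨ z = nbrF 1 w ∨ z = nbrF 1 (nbrF 0 w)) := by
  have h0 : (0:ℕ) < n + 2 := by omega
  have h1 : (1:ℕ) < n + 2 := by omega
  constructor
  · intro h
    have hhi : ∀ i, 2 ≤ i → bitOf z i = bitOf w i := by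
      intro i hi
      by_cases hin : i < n + 2
      · have := congrArg (fun t => bitOf t (i - 2)) h
        rw [bitOf_drop2 _ _ (by omega), bitOf_drop2 _ _ (by omega),
          show i - 2 + 2 = i by omega] at this
        exact this.symm
      · rw [bitOf_ge (by omega), bitOf_ge (by omega)]
    by_cases c0 : bitOf z 0 = bitOf w 0 <;> by_cases c1 : bitOf z 1 = bitOf w 1
    · left
      apply bit_ext; intro i
      rcases Nat.lt_or_ge i 2 with hi | hi
      · interval_cases i <;> assumption
      · exact hhi i hi
    · right; right; left
      apply bit_ext; intro i
      rw [bitOf_nbrF 1 w i h1]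
      rcases Nat.lt_or_ge i 2 with hi | hi
      · interval_cases i
        · rw [if_neg (by omega), if_neg (by omega)]; exact c0
        · rw [if_pos rfl]
          cases hzw : bitOf w 1 <;> cases hz1 : bitOf z 1 <;> simp_all
      · rw [if_neg (by omega), if_neg (by omega)]; exact hhi i hi
    · right; left
      apply bit_ext; intro i
      rw [bitOf_nbrF 0 w i h0]
      rcases Nat.lt_or_ge i 2 with hi | hi
      · interval_cases i
        · rw [if_pos rfl]
          cases hzw : bitOf w 0 <;> cases hz0 : bitOf z 0 <;> simp_all
        · rw [if_neg (by omega), if_neg (by omega)]; exact c1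
      · rw [if_neg (by omega), if_neg (by omega)]; exact hhi i hi
    · right; right; right
      apply bit_ext; intro i
      rw [bitOf_nbrF 1 _ i h1]
      rcases Nat.lt_or_ge i 2 with hi | hi
      · interval_cases i
        · rw [if_neg (by omega), if_neg (by omega), bitOf_nbrF 0 w 0 h0, if_pos rfl]
          cases hzw : bitOf w 0 <;> cases hz0 : bitOf z 0 <;> simp_all
        · rw [if_pos rfl, bitOf_nbrF 0 w 1 h0, if_neg (by omega), if_neg (by omega)]
          cases hzw : bitOf w 1 <;> cases hz1 : bitOf z 1 <;> simp_all
      · rw [if_neg (by omega), if_neg (by omega),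
          bitOf_nbrF_gt h0 w (show 0 < i by omega)]
        exact hhi i hi
  · rintro (rfl | rfl | rfl | rfl)
    · rfl
    · exact (drop2_nbrF0 w).symm
    · exact (drop2_nbrF1 w).symm
    · rw [drop2_nbrF1, drop2_nbrF0]

end CQaux
open CQaux in
/-- for `n ≥ 5`, an automorphism `φ` of `CQ (n+2)` induces an
automorphism of `CQ n` by appending `00`, applying `φ`, and deleting the two least
significant bits. -/
theorem induced_aut (n : ℕ) (hn : 5 ≤ n) (φ : CQ (n + 2) ≃g CQ (n + 2)) :
    IsAut n (fun v => drop2 (φ (ext2 v))) := by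
  have hm : 6 ≤ n + 2 := by omega
  have const : ∀ (ψ : CQ (n+2) ≃g CQ (n+2)) (w z : Fin (n+2) → Bool),
      drop2 w = drop2 z → drop2 (ψ w) = drop2 (ψ z) := by
    intro ψ w z h
    rcases classEq.mp h with rfl | rfl | rfl | rfl
    · rfl
    · rw [aut_comm0 hm ψ w, drop2_nbrF0]
    · rw [aut_comm1 hm ψ w, drop2_nbrF1]
    · rw [aut_comm1 hm ψ _, aut_comm0 hm ψ w, drop2_nbrF1, drop2_nbrF0]
  have hinj : Function.Injective (fun v => drop2 (φ (ext2 v))) := by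
    intro u v h
    simp only at h
    rcases classEq.mp h with h' | h' | h' | h'
    · have hE : ext2 v = ext2 u := φ.injective h'
      have := congrArg drop2 hE
      rw [drop2_ext2, drop2_ext2] at this; exact this.symm
    · rw [← aut_comm0 hm φ] at h'
      have hE : ext2 v = nbrF 0 (ext2 u) := φ.injective h'
      have := congrArg drop2 hE
      rw [drop2_ext2, drop2_nbrF0, drop2_ext2] at this; exact this.symm
    · rw [← aut_comm1 hm φ] at h'
      have hE : ext2 v = nbrF 1 (ext2 u) := φ.injective h'
      have := congrArg drop2 hE
      rw [drop2_ext2, drop2_nbrF1, drop2_ext2] at this; exact this.symm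
    · rw [← aut_comm0 hm φ, ← aut_comm1 hm φ] at h'
      have hE : ext2 v = nbrF 1 (nbrF 0 (ext2 u)) := φ.injective h'
      have := congrArg drop2 hE
      rw [drop2_ext2, drop2_nbrF1, drop2_nbrF0, drop2_ext2] at this; exact this.symm
  unfold IsAut
  refine ⟨Finite.injective_iff_bijective.mp hinj, ?_⟩
  intro u v
  constructor
  · intro h
    have hneq : drop2 (φ (ext2 u)) ≠ drop2 (φ (ext2 v)) := fun e => h.ne (hinj e)
    exact Adj_drop2 (φ.map_adj_iff.mpr (Adj_ext2 h)) hneq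
  · intro h
    simp only at h
    have hne : u ≠ v := by
      rintro rfl
      exact (CQ n).irrefl h
    have H2 := φ.symm.map_adj_iff.mpr (Adj_ext2 h)
    have d1 : drop2 (φ.symm (ext2 (drop2 (φ (ext2 u))))) = u := by
      have := const φ.symm (ext2 (drop2 (φ (ext2 u)))) (φ (ext2 u)) (drop2_ext2 _)
      rwa [RelIso.symm_apply_apply, drop2_ext2] at this
    have d2 : drop2 (φ.symm (ext2 (drop2 (φ (ext2 v))))) = v := by
      have := const φ.symm (ext2 (drop2 (φ (ext2 v)))) (φ (ext2 v)) (drop2_ext2 _)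
      rwa [RelIso.symm_apply_apply, drop2_ext2] at this
    have := Adj_drop2 H2 (by rw [d1, d2]; exact hne)
    rwa [d1, d2] at this
end
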